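/- Let L satisfy the curvature-dimension condition CD(0,n) with n < 0 (i.e. Γ₂(f) ≥ (1/n)(Lf)² for all smooth f), and let θ > 0 be smooth on an interval I with 2((n−1)/n)(θ')² ≤ θθ''. Then for every smooth F with values in I satisfying LF = 0, one has L(θ(F)Γ(F)) ≥ 0. -/

import Mathlib

open MeasureTheory

/-- The diffusion operator `L = Δ + X·∇` on the flat Riemannian manifold `ℝ^d`. -/
noncomputable def diffOp (d : ℕ) (X : EuclideanSpace ℝ (Fin d) → EuclideanSpace ℝ (Fin d))
    (f : EuclideanSpace ℝ (Fin d) → ℝ) (x : EuclideanSpace ℝ (Fin d)) : ℝ :=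
  (∑ i : Fin d,
      fderiv ℝ (fun z => fderiv ℝ f z (EuclideanSpace.single i 1)) x
        (EuclideanSpace.single i 1)) + fderiv ℝ f x (X x)

/-- The carré du champ operator `Γ(f,g) = ½(L(fg) − fLg − gLf)`. -/
noncomputable def carreDuChamp (d : ℕ)
    (X : EuclideanSpace ℝ (Fin d) → EuclideanSpace ℝ (Fin d))
    (f g : EuclideanSpace ℝ (Fin d) → ℝ) (x : EuclideanSpace ℝ (Fin d)) : ℝ :=
  (diffOp d X (fun y => f y * g y) x - f x * diffOp d X g x - g x * diffOp d X f x) / 2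

/-- The iterated carré du champ operator `Γ₂(f) = ½ L(Γ(f)) − Γ(f, Lf)`. -/
noncomputable def carreDuChamp2 (d : ℕ)
    (X : EuclideanSpace ℝ (Fin d) → EuclideanSpace ℝ (Fin d))
    (f : EuclideanSpace ℝ (Fin d) → ℝ) (x : EuclideanSpace ℝ (Fin d)) : ℝ :=
  diffOp d X (fun y => carreDuChamp d X f f y) x / 2 -
    carreDuChamp d X f (fun y => diffOp d X f y) x

namespace Subharm

variable {d : ℕ}

noncomputable def pdi (i : Fin d) (f : EuclideanSpace ℝ (Fin d) → ℝ)
    (x : EuclideanSpace ℝ (Fin d)) : ℝ :=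
  fderiv ℝ f x (EuclideanSpace.single i 1)

theorem diffOp_eq (X : EuclideanSpace ℝ (Fin d) → EuclideanSpace ℝ (Fin d))
    (f : EuclideanSpace ℝ (Fin d) → ℝ) (x : EuclideanSpace ℝ (Fin d)) :
    diffOp d X f x = (∑ i : Fin d, pdi i (pdi i f) x) + fderiv ℝ f x (X x) := rfl

theorem pdi_smooth {f : EuclideanSpace ℝ (Fin d) → ℝ} (hf : ContDiff ℝ (⊤ : ℕ∞) f) (i : Fin d) :
    ContDiff ℝ (⊤ : ℕ∞) (pdi i f) :=
  (hf.fderiv_right (by simp)).clm_apply contDiff_const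

theorem pdi_add {f g : EuclideanSpace ℝ (Fin d) → ℝ} {x} (hf : DifferentiableAt ℝ f x)
    (hg : DifferentiableAt ℝ g x) (i : Fin d) :
    pdi i (fun y => f y + g y) x = pdi i f x + pdi i g x := by
  simp [pdi, fderiv_fun_add hf hg]

theorem pdi_mul {f g : EuclideanSpace ℝ (Fin d) → ℝ} {x} (hf : DifferentiableAt ℝ f x)
    (hg : DifferentiableAt ℝ g x) (i : Fin d) :
    pdi i (fun y => f y * g y) x = f x * pdi i g x + g x * pdi i f x := by
  simp [pdi, fderiv_fun_mul hf hg]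

theorem pdi_const_mul {g : EuclideanSpace ℝ (Fin d) → ℝ} {x} (c : ℝ)
    (hg : DifferentiableAt ℝ g x) (i : Fin d) :
    pdi i (fun y => c * g y) x = c * pdi i g x := by
  simp [pdi, fderiv_const_mul hg c]

end Subharm
namespace Subharm
variable {d : ℕ}

theorem fderiv_comp_apply {g : ℝ → ℝ} {F : EuclideanSpace ℝ (Fin d) → ℝ}
    {x : EuclideanSpace ℝ (Fin d)} (hg : DifferentiableAt ℝ g (F x))
    (hF : DifferentiableAt ℝ F x) (v : EuclideanSpace ℝ (Fin d)) :
    fderiv ℝ (fun y => g (F y)) x v = deriv g (F x) * fderiv ℝ F x v := by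
  have h1 : fderiv ℝ (fun y => g (F y)) x = (fderiv ℝ g (F x)).comp (fderiv ℝ F x) :=
    fderiv_comp x hg hF
  rw [h1]
  simp only [ContinuousLinearMap.comp_apply]
  rw [show fderiv ℝ F x v = (fderiv ℝ F x v) • (1:ℝ) by simp, _root_.map_smul, fderiv_apply_one_eq_deriv]
  simp [mul_comm]

theorem pdi_comp {g : ℝ → ℝ} {F : EuclideanSpace ℝ (Fin d) → ℝ}
    {x : EuclideanSpace ℝ (Fin d)} (hg : DifferentiableAt ℝ g (F x))
    (hF : DifferentiableAt ℝ F x) (i : Fin d) :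
    pdi i (fun y => g (F y)) x = deriv g (F x) * pdi i F x :=
  fderiv_comp_apply hg hF _

theorem comp_smooth {g : ℝ → ℝ} {J : Set ℝ} (hJ : IsOpen J) (hg : ContDiffOn ℝ (⊤ : ℕ∞) g J)
    {F : EuclideanSpace ℝ (Fin d) → ℝ} (hF : ContDiff ℝ (⊤ : ℕ∞) F) (hFr : ∀ y, F y ∈ J) :
    ContDiff ℝ (⊤ : ℕ∞) (fun y => g (F y)) := by
  rw [contDiff_iff_contDiffAt]
  exact fun x => (hg.contDiffAt (hJ.mem_nhds (hFr x))).comp x hF.contDiffAt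

theorem diffOp_comp (X : EuclideanSpace ℝ (Fin d) → EuclideanSpace ℝ (Fin d))
    {g : ℝ → ℝ} {J : Set ℝ} (hJ : IsOpen J) (hg : ContDiffOn ℝ (⊤ : ℕ∞) g J)
    {F : EuclideanSpace ℝ (Fin d) → ℝ} (hF : ContDiff ℝ (⊤ : ℕ∞) F) (hFr : ∀ y, F y ∈ J)
    (x : EuclideanSpace ℝ (Fin d)) :
    diffOp d X (fun y => g (F y)) x
      = deriv g (F x) * diffOp d X F x
        + deriv (deriv g) (F x) * ∑ i : Fin d, (pdi i F x) ^ 2 := by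
  have hFd : ∀ y, DifferentiableAt ℝ F y := fun y => hF.differentiable (by simp) y
  have hg' : ContDiffOn ℝ (⊤ : ℕ∞) (deriv g) J := hg.deriv_of_isOpen hJ (by simp)
  have hgat : ∀ y : EuclideanSpace ℝ (Fin d), DifferentiableAt ℝ g (F y) := fun y =>
    ((hg.contDiffAt (hJ.mem_nhds (hFr y))).differentiableAt (by simp))
  have hg'at : ∀ y : EuclideanSpace ℝ (Fin d), DifferentiableAt ℝ (deriv g) (F y) := fun y =>
    ((hg'.contDiffAt (hJ.mem_nhds (hFr y))).differentiableAt (by simp))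
  have key : ∀ i : Fin d, (pdi i (fun y => g (F y))) = fun z => deriv g (F z) * pdi i F z :=
    fun i => funext fun z => pdi_comp (hgat z) (hFd z) i
  have main : ∀ i : Fin d, pdi i (pdi i (fun y => g (F y))) x
      = deriv g (F x) * pdi i (pdi i F) x + deriv (deriv g) (F x) * (pdi i F x) ^ 2 := by
    intro i
    rw [key i]
    have h1 : DifferentiableAt ℝ (fun z => deriv g (F z)) x := (hg'at x).comp x (hFd x)
    have h2 : DifferentiableAt ℝ (pdi i F) x :=
      (pdi_smooth hF i).differentiable (by simp) x
    rw [pdi_mul h1 h2 i, pdi_comp (hg'at x) (hFd x) i]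
    ring
  rw [diffOp_eq, diffOp_eq]
  simp only [main]
  rw [fderiv_comp_apply (hgat x) (hFd x), Finset.sum_add_distrib, ← Finset.mul_sum,
    ← Finset.mul_sum]
  ring

end Subharm
namespace Subharm
variable {d : ℕ}

theorem diffOp_mul (X : EuclideanSpace ℝ (Fin d) → EuclideanSpace ℝ (Fin d))
    {f g : EuclideanSpace ℝ (Fin d) → ℝ} (hf : ContDiff ℝ (⊤ : ℕ∞) f) (hg : ContDiff ℝ (⊤ : ℕ∞) g)
    (x : EuclideanSpace ℝ (Fin d)) :
    diffOp d X (fun y => f y * g y) x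
      = f x * diffOp d X g x + g x * diffOp d X f x
        + 2 * ∑ i : Fin d, pdi i f x * pdi i g x := by
  have hfd : ∀ y, DifferentiableAt ℝ f y := fun y => hf.differentiable (by simp) y
  have hgd : ∀ y, DifferentiableAt ℝ g y := fun y => hg.differentiable (by simp) y
  have key : ∀ i : Fin d, (pdi i (fun y => f y * g y))
      = fun z => f z * pdi i g z + g z * pdi i f z :=
    fun i => funext fun z => pdi_mul (hfd z) (hgd z) i
  have main : ∀ i : Fin d, pdi i (pdi i (fun y => f y * g y)) x
      = f x * pdi i (pdi i g) x + g x * pdi i (pdi i f) x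
        + 2 * (pdi i f x * pdi i g x) := by
    intro i
    rw [key i]
    have h1 : DifferentiableAt ℝ (fun z => f z * pdi i g z) x :=
      (hfd x).mul ((pdi_smooth hg i).differentiable (by simp) x)
    have h2 : DifferentiableAt ℝ (fun z => g z * pdi i f z) x :=
      (hgd x).mul ((pdi_smooth hf i).differentiable (by simp) x)
    rw [pdi_add h1 h2 i,
      pdi_mul (hfd x) ((pdi_smooth hg i).differentiable (by simp) x) i,
      pdi_mul (hgd x) ((pdi_smooth hf i).differentiable (by simp) x) i]
    ring
  have hX : fderiv ℝ (fun y => f y * g y) x (X x)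
      = f x * fderiv ℝ g x (X x) + g x * fderiv ℝ f x (X x) := by
    rw [fderiv_fun_mul (hfd x) (hgd x)]; simp
  rw [diffOp_eq, diffOp_eq, diffOp_eq]
  simp only [main]
  rw [hX, Finset.sum_add_distrib, Finset.sum_add_distrib, ← Finset.mul_sum, ← Finset.mul_sum,
    ← Finset.mul_sum]
  ring

theorem carre_eq (X : EuclideanSpace ℝ (Fin d) → EuclideanSpace ℝ (Fin d))
    {f g : EuclideanSpace ℝ (Fin d) → ℝ} (hf : ContDiff ℝ (⊤ : ℕ∞) f) (hg : ContDiff ℝ (⊤ : ℕ∞) g)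
    (x : EuclideanSpace ℝ (Fin d)) :
    carreDuChamp d X f g x = ∑ i : Fin d, pdi i f x * pdi i g x := by
  rw [carreDuChamp, diffOp_mul X hf hg x]; ring

theorem diffOp_prod_expand (X : EuclideanSpace ℝ (Fin d) → EuclideanSpace ℝ (Fin d))
    (u v : EuclideanSpace ℝ (Fin d) → ℝ) (x : EuclideanSpace ℝ (Fin d)) :
    diffOp d X (fun y => u y * v y) x
      = 2 * carreDuChamp d X u v x + u x * diffOp d X v x + v x * diffOp d X u x := by
  rw [carreDuChamp]; ring

end Subharm
namespace Subharm
variable {d : ℕ}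

theorem diffOp_zero (X : EuclideanSpace ℝ (Fin d) → EuclideanSpace ℝ (Fin d))
    (x : EuclideanSpace ℝ (Fin d)) : diffOp d X (fun _ => (0:ℝ)) x = 0 := by
  simp [diffOp]

theorem carre_harm_zero (X : EuclideanSpace ℝ (Fin d) → EuclideanSpace ℝ (Fin d))
    (F : EuclideanSpace ℝ (Fin d) → ℝ) (hharm : ∀ y, diffOp d X F y = 0)
    (x : EuclideanSpace ℝ (Fin d)) :
    carreDuChamp d X F (fun y => diffOp d X F y) x = 0 := by
  have h0 : (fun y => diffOp d X F y) = fun _ => (0:ℝ) := funext hharm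
  rw [h0, carreDuChamp]
  simp only [mul_zero, zero_mul]
  simp [diffOp_zero]

theorem master (X : EuclideanSpace ℝ (Fin d) → EuclideanSpace ℝ (Fin d))
    {J : Set ℝ} (hJ : IsOpen J) {ψ : ℝ → ℝ} (hψ : ContDiffOn ℝ (⊤ : ℕ∞) ψ J)
    {F : EuclideanSpace ℝ (Fin d) → ℝ} (hF : ContDiff ℝ (⊤ : ℕ∞) F) (hFr : ∀ y, F y ∈ J)
    (hharm : ∀ y, diffOp d X F y = 0)
    {G : EuclideanSpace ℝ (Fin d) → ℝ} (hG : ContDiff ℝ (⊤ : ℕ∞) G)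
    (hGx : G = fun y => ∑ i : Fin d, (pdi i F y) ^ 2)
    (x : EuclideanSpace ℝ (Fin d)) :
    diffOp d X (fun y => ψ (F y) * G y) x
      = 2 * deriv ψ (F x) * (∑ i : Fin d, pdi i F x * pdi i G x)
        + ψ (F x) * diffOp d X G x + deriv (deriv ψ) (F x) * (G x) ^ 2 := by
  have hψF : ContDiff ℝ (⊤ : ℕ∞) (fun y => ψ (F y)) := comp_smooth hJ hψ hF hFr
  have hpd : ∀ i : Fin d, pdi i (fun y => ψ (F y)) x = deriv ψ (F x) * pdi i F x := fun i =>
    pdi_comp ((hψ.contDiffAt (hJ.mem_nhds (hFr x))).differentiableAt (by simp))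
      (hF.differentiable (by simp) x) i
  rw [diffOp_prod_expand, carre_eq X hψF hG x, diffOp_comp X hJ hψ hF hFr x, hharm x]
  simp only [hpd]
  rw [Finset.sum_congr rfl (fun i _ => mul_assoc (deriv ψ (F x)) (pdi i F x) (pdi i G x)),
    ← Finset.mul_sum]
  have : (∑ i : Fin d, (pdi i F x) ^ 2) = G x := by rw [hGx]
  rw [this]
  ring

theorem deriv_affine (a b c0 : ℝ) :
    deriv (fun y : ℝ => a + b * (y - c0)) = fun _ => b := by
  funext y
  have h : HasDerivAt (fun y : ℝ => a + b * (y - c0)) b y := by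
    have h1 : HasDerivAt (fun y : ℝ => y - c0) 1 y := (hasDerivAt_id y).sub_const c0
    have := (h1.const_mul b).const_add a
    simpa using this
  exact h.deriv

theorem deriv_quad (a b c0 : ℝ) :
    deriv (fun y : ℝ => a * (y - c0) + b / 2 * (y - c0) ^ 2)
      = fun y => a + b * (y - c0) := by
  funext y
  have h1 : HasDerivAt (fun y : ℝ => y - c0) 1 y := (hasDerivAt_id y).sub_const c0
  have h : HasDerivAt (fun y : ℝ => a * (y - c0) + b / 2 * (y - c0) ^ 2)
      (a + b * (y - c0)) y := by
    have := ((h1.const_mul a).add ((h1.pow 2).const_mul (b / 2)))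
    exact this.congr_deriv (by ring)
  exact h.deriv

theorem deriv_sq_affine (a b c0 : ℝ) :
    deriv (fun t : ℝ => (a + b * (t - c0)) ^ 2) = fun t => 2 * b * (a + b * (t - c0)) := by
  funext t
  have h1 : HasDerivAt (fun y : ℝ => a + b * (y - c0)) b t :=
    by simpa using (((hasDerivAt_id t).sub_const c0).const_mul b).const_add a
  have h : HasDerivAt (fun t : ℝ => (a + b * (t - c0)) ^ 2) (2 * b * (a + b * (t - c0))) t := by
    have := h1.pow 2
    exact this.congr_deriv (by ring)
  exact h.deriv

theorem deriv2_sq_affine (a b c0 : ℝ) :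
    deriv (deriv (fun t : ℝ => (a + b * (t - c0)) ^ 2)) = fun _ => 2 * b * b := by
  rw [deriv_sq_affine]
  funext t
  have h : HasDerivAt (fun t : ℝ => 2 * b * (a + b * (t - c0))) (2 * b * b) t := by
    have h1 : HasDerivAt (fun y : ℝ => a + b * (y - c0)) b t :=
      by simpa using (((hasDerivAt_id t).sub_const c0).const_mul b).const_add a
    simpa using h1.const_mul (2 * b)
  exact h.deriv

end Subharm


open Subharm

/-- Sub-harmonic functionals under `CD(0,n)`, `n < 0`: if `L` satisfies
`Γ₂(f) ≥ (1/n)(Lf)²` for all smooth `f`, and `θ > 0` is smooth on an (open) interval `I`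
with `2((n−1)/n)(θ')² ≤ θθ''` on `I`, then for every smooth `L`-harmonic `F` with values
in `I` one has `L(θ(F)Γ(F)) ≥ 0`. -/
theorem subharmonic_theta (d : ℕ) (hd : 1 ≤ d) (n : ℝ) (hn : n < 0)
    (X : EuclideanSpace ℝ (Fin d) → EuclideanSpace ℝ (Fin d)) (hX : ContDiff ℝ (⊤ : ℕ∞) X)
    (hCD : ∀ f : EuclideanSpace ℝ (Fin d) → ℝ, ContDiff ℝ (⊤ : ℕ∞) f →
      ∀ x, carreDuChamp2 d X f x ≥ (1 / n) * (diffOp d X f x) ^ 2)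
    (I : Set ℝ) (hI : IsOpen I) (hI' : I.OrdConnected)
    (θ : ℝ → ℝ) (hθ : ContDiffOn ℝ (⊤ : ℕ∞) θ I) (hθpos : ∀ y ∈ I, 0 < θ y)
    (hθineq : ∀ y ∈ I, 2 * ((n - 1) / n) * (deriv θ y) ^ 2 ≤ θ y * deriv (deriv θ) y)
    (F : EuclideanSpace ℝ (Fin d) → ℝ) (hF : ContDiff ℝ (⊤ : ℕ∞) F)
    (hrange : ∀ x, F x ∈ I) (hharm : ∀ x, diffOp d X F x = 0) :
    ∀ x, 0 ≤ diffOp d X (fun y => θ (F y) * carreDuChamp d X F F y) x := by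
  intro x
  have hne : n ≠ 0 := ne_of_lt hn
  set Gf : EuclideanSpace ℝ (Fin d) → ℝ := fun y => ∑ i : Fin d, (pdi i F y) ^ 2
    with hGfdef
  have hGfs : ContDiff ℝ (⊤ : ℕ∞) Gf :=
    ContDiff.sum fun i _ => (pdi_smooth hF i).pow 2
  have hGeq : (fun y => carreDuChamp d X F F y) = Gf := funext fun y => by
    rw [carre_eq X hF hF y, hGfdef]
    exact Finset.sum_congr rfl fun i _ => (pow_two (pdi i F y)).symm
  set c := carreDuChamp2 d X F x with hcdef
  set g := Gf x with hgdef
  set Hx := ∑ i : Fin d, pdi i F x * pdi i Gf x with hHdef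
  have hc : 0 ≤ c := by
    have := hCD F hF x
    rw [hharm x] at this
    simpa [hcdef] using this
  have hLG : diffOp d X Gf x = 2 * c := by
    have h2 := carre_harm_zero X F hharm x
    have h3 : c = diffOp d X Gf x / 2 - 0 := by
      rw [hcdef, carreDuChamp2, h2, hGeq]
    linarith [h3]
  -- the quadratic inequality from CD(0,n) applied to φ ∘ F
  have hquad : ∀ a : ℝ, 0 ≤ c * (a * a) + Hx * a + ((1 - 1/n) * g ^ 2) := by
    intro a
    set b : ℝ := 1 with hbdef
    set c0 := F x with hc0def
    set φ : ℝ → ℝ := fun y => a * (y - c0) + b / 2 * (y - c0) ^ 2 with hφdef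
    have hφs : ContDiff ℝ (⊤ : ℕ∞) φ := by
      rw [hφdef]
      exact (contDiff_const.mul (contDiff_id.sub contDiff_const)).add
        (contDiff_const.mul ((contDiff_id.sub contDiff_const).pow 2))
    have hφF : ContDiff ℝ (⊤ : ℕ∞) (fun y => φ (F y)) := hφs.comp hF
    have hdφ : deriv φ = fun y => a + b * (y - c0) := by rw [hφdef]; exact deriv_quad a b c0
    have hddφ : deriv (deriv φ) = fun _ => b := by rw [hdφ]; exact deriv_affine a b c0
    have hLφ : ∀ y, diffOp d X (fun z => φ (F z)) y = b * Gf y := by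
      intro y
      rw [diffOp_comp X isOpen_univ hφs.contDiffOn hF (fun _ => trivial) y, hharm y,
        hddφ, hdφ, hGfdef]
      simp
    set ψ : ℝ → ℝ := fun t => (a + b * (t - c0)) ^ 2 with hψdef
    have hψs : ContDiff ℝ (⊤ : ℕ∞) ψ := by
      rw [hψdef]
      exact (contDiff_const.add (contDiff_const.mul (contDiff_id.sub contDiff_const))).pow 2
    have hΓφ : (fun y => carreDuChamp d X (fun z => φ (F z)) (fun z => φ (F z)) y)
        = fun y => ψ (F y) * Gf y := funext fun y => by
      rw [carre_eq X hφF hφF y]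
      have hpd : ∀ i : Fin d, pdi i (fun z => φ (F z)) y = deriv φ (F y) * pdi i F y :=
        fun i => pdi_comp (hφs.differentiable (by simp) (F y)) (hF.differentiable (by simp) y) i
      simp only [hpd]
      rw [hGfdef, hψdef, hdφ, Finset.mul_sum]
      exact Finset.sum_congr rfl fun i _ => by ring
    have hm := master X isOpen_univ hψs.contDiffOn hF (fun _ => trivial) hharm hGfs hGfdef x
    have hdψ : deriv ψ = fun t => 2 * b * (a + b * (t - c0)) := by
      rw [hψdef]; exact deriv_sq_affine a b c0
    have hddψ : deriv (deriv ψ) = fun _ => 2 * b * b := by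
      rw [hψdef]; exact deriv2_sq_affine a b c0
    have hΓmix : carreDuChamp d X (fun z => φ (F z)) (fun y => b * Gf y) x
        = a * b * Hx := by
      rw [carre_eq X hφF (contDiff_const.mul hGfs) x]
      have hpd : ∀ i : Fin d, pdi i (fun z => φ (F z)) x = deriv φ (F x) * pdi i F x :=
        fun i => pdi_comp (hφs.differentiable (by simp) (F x)) (hF.differentiable (by simp) x) i
      have hpd2 : ∀ i : Fin d, pdi i (fun y => b * Gf y) x = b * pdi i Gf x :=
        fun i => pdi_const_mul b (hGfs.differentiable (by simp) x) i
      simp only [hpd, hpd2, hdφ, ← hc0def, sub_self, mul_zero, add_zero]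
      rw [hHdef, Finset.mul_sum]
      exact Finset.sum_congr rfl fun i _ => by ring
    have hΓ2 : carreDuChamp2 d X (fun z => φ (F z)) x
        = a ^ 2 * c + a * b * Hx + b ^ 2 * g ^ 2 := by
      rw [carreDuChamp2, hΓφ, funext hLφ, hΓmix, hm, hddψ, hdψ, hψdef, hLG]
      simp only [← hc0def, sub_self, mul_zero, add_zero]
      rw [← hgdef, ← hHdef]
      ring
    have hCDφ := hCD (fun z => φ (F z)) hφF x
    rw [hΓ2, hLφ x, ← hgdef] at hCDφ
    have hb1 : b = 1 := hbdef
    nlinarith [hCDφ]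
  have hdisc : Hx ^ 2 ≤ 4 * c * ((1 - 1/n) * g ^ 2) := by
    have hd0 := discrim_le_zero hquad
    rw [discrim] at hd0
    linarith
  -- final algebra
  have hFI := hrange x
  have ht : 0 < θ (F x) := hθpos _ hFI
  have hineq := hθineq _ hFI
  have hkeq : (1 - 1/n) = (n - 1)/n := by field_simp
  rw [hkeq] at hdisc
  have hk : 0 < (n - 1)/n := div_pos_of_neg_of_neg (by linarith) hn
  have hfun : (fun y => θ (F y) * carreDuChamp d X F F y) = fun y => θ (F y) * Gf y := by
    funext y
    rw [congrFun hGeq y]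
  rw [hfun, master X hI hθ hF hrange hharm hGfs hGfdef x, hLG, ← hgdef, ← hHdef]
  set t := θ (F x) with htdef
  set t1 := deriv θ (F x) with ht1def
  set t2 := deriv (deriv θ) (F x) with ht2def
  set k := (n - 1)/n with hkdef
  -- hineq : 2 * k * t1^2 ≤ t * t2
  have ht2n : 0 ≤ t2 := by nlinarith [sq_nonneg t1]
  have e1 : t1 ^ 2 * Hx ^ 2 ≤ t1 ^ 2 * (4 * c * (k * g ^ 2)) :=
    mul_le_mul_of_nonneg_left hdisc (sq_nonneg t1)
  have e2 : (2 * k * t1 ^ 2) * (c * g ^ 2) ≤ (t * t2) * (c * g ^ 2) :=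
    mul_le_mul_of_nonneg_right hineq (mul_nonneg hc (sq_nonneg g))
  have e3 : (0:ℝ) ≤ (2 * t * c - t2 * g ^ 2) ^ 2 := sq_nonneg _
  have hA2 : (2 * t1 * Hx) ^ 2 ≤ (2 * t * c + t2 * g ^ 2) ^ 2 := by nlinarith [e1, e2, e3]
  have hB : 0 ≤ 2 * t * c + t2 * g ^ 2 :=
    add_nonneg (mul_nonneg (mul_nonneg (by norm_num) ht.le) hc)
      (mul_nonneg ht2n (sq_nonneg g))
  nlinarith [hA2, hB]
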